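/- arXiv:1001.1789 — 9 statements merged into one kernel-verified Lean document; each statement's English description precedes it below -/
import Mathlib

section
/- The cubic polynomial p(x) = 729 c^4 κ^3 x^3 − 2916 c^4 κ^2 x^2 + 144(27 c^4 κ + 4 m^2) x − 1728 has exactly one positive real root when κ > 0, m > 0 and c ≠ 0. -/
/-- The cubic `p(x) = 729 c⁴ κ³ x³ − 2916 c⁴ κ² x² + 144(27 c⁴ κ + 4 m²) x − 1728`
has exactly one positive real root when `κ > 0`, `m > 0`, `c ≠ 0`. -/
theorem stmt_0 (κ m c : ℝ) (hκ : 0 < κ) (hm : 0 < m) (hc : c ≠ 0) :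
    ∃! x : ℝ, 0 < x ∧
      729 * c ^ 4 * κ ^ 3 * x ^ 3 - 2916 * c ^ 4 * κ ^ 2 * x ^ 2
        + 144 * (27 * c ^ 4 * κ + 4 * m ^ 2) * x - 1728 = 0 := by
  set f : ℝ → ℝ := fun x => 729 * c ^ 4 * κ ^ 3 * x ^ 3 - 2916 * c ^ 4 * κ ^ 2 * x ^ 2
        + 144 * (27 * c ^ 4 * κ + 4 * m ^ 2) * x - 1728 with hf
  have hc4 : 0 < c ^ 4 := by positivity
  have hm2 : 0 < m ^ 2 := by positivity
  have key : ∀ x, f x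
      = 27 * c ^ 4 * (3 * κ * x - 4) ^ 3 + 576 * m ^ 2 * x + 1728 * c ^ 4 - 1728 := by
    intro x; simp only [hf]; ring
  have hmono : StrictMono f := by
    intro a b hab
    rw [key a, key b]
    have hcube : (3 * κ * a - 4) ^ 3 ≤ (3 * κ * b - 4) ^ 3 := by
      nlinarith [sq_nonneg ((3*κ*a-4) + (3*κ*b-4)), sq_nonneg ((3*κ*a-4) - (3*κ*b-4)),
        mul_pos hκ (sub_pos.mpr hab)]
    nlinarith [mul_pos hm2 (sub_pos.mpr hab)]
  have hcont : Continuous f := by simp only [hf]; continuity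
  set x₀ : ℝ := 4 / (3 * κ) + 3 / m ^ 2 with hx₀
  clear_value x₀
  have hx₀pos : 0 < x₀ := by rw [hx₀]; positivity
  have hf0 : f 0 = -1728 := by simp [hf]
  have hfx₀ : 0 < f x₀ := by
    rw [key]
    have h1 : 3 * κ * x₀ - 4 = 9 * κ / m ^ 2 := by
      rw [hx₀]; field_simp; ring
    have h2 : 576 * m ^ 2 * x₀ ≥ 1728 := by
      rw [hx₀]
      have : m ^ 2 * (3 / m ^ 2) = 3 := by field_simp
      nlinarith [mul_pos hm2 (by positivity : (0:ℝ) < 4 / (3 * κ))]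
    have h3 : (0:ℝ) < 9 * κ / m ^ 2 := by positivity
    rw [h1]
    have h4 : 0 < 27 * c ^ 4 * (9 * κ / m ^ 2) ^ 3 := by positivity
    linarith
  obtain ⟨x, hxmem, hx⟩ := intermediate_value_Icc (le_of_lt hx₀pos)
      hcont.continuousOn ⟨by rw [hf0]; norm_num, le_of_lt hfx₀⟩
  have hxpos : 0 < x := by
    rcases lt_or_eq_of_le hxmem.1 with h | h
    · exact h
    · exfalso; rw [← h] at hx; rw [hf0] at hx; norm_num at hx
  refine ⟨x, ⟨hxpos, hx⟩, ?_⟩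
  rintro y ⟨hy, hfy⟩
  exact hmono.injective (by rw [hx]; simpa [hf] using hfy)
end

section
/- If κ > 0, m > 0, c ≠ 0 and κ^{1/2} c^2 − (8/√3) m ≥ 0, then g(r) = c^2/r − 24m/(12 − 9κr^2)^{3/2} is strictly positive on (0, κ^{−1/2}). -/
/-- If `κ^{1/2} c² − (8/√3) m ≥ 0`, then `g(r) = c²/r − 24m/(12 − 9κr²)^{3/2}`
is strictly positive on `(0, κ^{−1/2})`. -/
theorem stmt_4 (κ m c : ℝ) (hκ : 0 < κ) (hm : 0 < m) (hc : c ≠ 0)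
    (h : 0 ≤ Real.sqrt κ * c ^ 2 - 8 / Real.sqrt 3 * m) :
    ∀ r ∈ Set.Ioo (0 : ℝ) (1 / Real.sqrt κ),
      0 < c ^ 2 / r - 24 * m / (12 - 9 * κ * r ^ 2) ^ ((3 : ℝ) / 2) := by
  intro r hr
  obtain ⟨hr0, hr1⟩ := hr
  have hκ' : 0 < Real.sqrt κ := Real.sqrt_pos.mpr hκ
  have hsqκ : Real.sqrt κ ^ 2 = κ := Real.sq_sqrt hκ.le
  have hs3 : 0 < Real.sqrt 3 := Real.sqrt_pos.mpr (by norm_num)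
  have hsq3 : Real.sqrt 3 ^ 2 = 3 := Real.sq_sqrt (by norm_num)
  have hrκ : Real.sqrt κ * r < 1 := by
    rw [lt_div_iff₀ hκ'] at hr1
    linarith [hr1]
  have hκr2 : κ * r ^ 2 < 1 := by
    have h1 : (Real.sqrt κ * r) ^ 2 < 1 := by
      nlinarith [mul_pos hκ' hr0]
    nlinarith [h1, hsqκ]
  have hA3 : (3 : ℝ) < 12 - 9 * κ * r ^ 2 := by nlinarith
  have hApow : (3 : ℝ) ^ ((3 : ℝ) / 2) < (12 - 9 * κ * r ^ 2) ^ ((3 : ℝ) / 2) :=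
    Real.rpow_lt_rpow (by norm_num) hA3 (by norm_num)
  have h3pow : (3 : ℝ) ^ ((3 : ℝ) / 2) = 3 * Real.sqrt 3 := by
    rw [show ((3 : ℝ) / 2) = 1 + 1 / 2 by norm_num,
      Real.rpow_add (by norm_num : (0:ℝ) < 3), Real.rpow_one,
      ← Real.sqrt_eq_rpow]
  have hApos : (0 : ℝ) < (12 - 9 * κ * r ^ 2) ^ ((3 : ℝ) / 2) := by
    rw [h3pow] at hApow; nlinarith
  -- from h : √3 * √κ * c² ≥ 8 m
  have h8m : 8 * m ≤ Real.sqrt 3 * Real.sqrt κ * c ^ 2 := by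
    have h2 : 8 / Real.sqrt 3 * m ≤ Real.sqrt κ * c ^ 2 := by linarith
    have h3 := mul_le_mul_of_nonneg_left h2 hs3.le
    have h4 : Real.sqrt 3 * (8 / Real.sqrt 3 * m) = 8 * m := by
      field_simp
    linarith [h3, h4.symm.le]
  have hc2 : 0 < c ^ 2 := by positivity
  -- key inequality : 24 * m * r < c² * A^{3/2}
  have hkey : 24 * m * r < c ^ 2 * (12 - 9 * κ * r ^ 2) ^ ((3 : ℝ) / 2) := by
    have h5 : 24 * m * r < 24 * m / Real.sqrt κ := by
      rw [lt_div_iff₀ hκ']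
      nlinarith
    have h6 : 24 * m / Real.sqrt κ ≤ c ^ 2 * (3 * Real.sqrt 3) := by
      rw [div_le_iff₀ hκ']
      nlinarith [mul_le_mul_of_nonneg_left h8m hs3.le]
    have h7 : c ^ 2 * (3 * Real.sqrt 3) < c ^ 2 * (12 - 9 * κ * r ^ 2) ^ ((3 : ℝ) / 2) := by
      rw [← h3pow]
      exact mul_lt_mul_of_pos_left hApow hc2
    linarith
  rw [sub_pos, div_lt_div_iff₀ hApos hr0]
  nlinarith [hkey]
end

section
/- If κ > 0, m > 0, c ≠ 0 and κ^{1/2} c^2 − (8/√3) m < 0, then there exists a unique r₀ ∈ (0, κ^{−1/2}) with g(r₀) = 0, where g(r) = c^2/r − 24m/(12 − 9κr^2)^{3/2}; moreover g > 0 on (0, r₀) and g < 0 on (r₀, κ^{−1/2}). -/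
/-!
Multiplying `g(r)` by the positive factor `r (12 − 9κr²)^{3/2}` gives
`c² (12 − 9κr²)^{3/2} − 24 m r`, which is continuous and strictly decreasing on `[0, κ^{−1/2}]`,
positive at `0` and, at `κ^{−1/2}` where `12 − 9κr² = 3`, equal to `3√3 c² − 24 m κ^{−1/2}`,
which is negative exactly under the hypothesis. The intermediate value theorem and strict
monotonicity then give a unique sign change.
-/

open Set

def IsUniqueSignChange (f : ℝ → ℝ) (a b x : ℝ) : Prop :=
  x ∈ Ioo a b ∧ f x = 0 ∧ (∀ y ∈ Ioo a x, 0 < f y) ∧ (∀ y ∈ Ioo x b, f y < 0) ∧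
    ∀ y ∈ Ioo a b, f y = 0 → y = x

theorem StrictAntiOn.exists_isUniqueSignChange {f : ℝ → ℝ} {a b : ℝ} (hab : a ≤ b)
    (hcont : ContinuousOn f (Icc a b)) (hanti : StrictAntiOn f (Icc a b))
    (ha : 0 < f a) (hb : f b < 0) : ∃ x, IsUniqueSignChange f a b x := by
  obtain ⟨x, hx, hfx⟩ := intermediate_value_Ioo' hab hcont ⟨hb, ha⟩
  have hxIcc : x ∈ Icc a b := Ioo_subset_Icc_self hx
  refine ⟨x, hx, hfx, fun y hy => ?_, fun y hy => ?_, fun y hy hfy => ?_⟩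
  · exact hfx ▸ hanti ⟨hy.1.le, hy.2.le.trans hxIcc.2⟩ hxIcc hy.2
  · exact hfx ▸ hanti hxIcc ⟨hxIcc.1.trans hy.1.le, hy.2.le⟩ hy.1
  · exact hanti.injOn (Ioo_subset_Icc_self hy) hxIcc (hfy.trans hfx.symm)

theorem IsUniqueSignChange.congr_sign {f g : ℝ → ℝ} {a b x : ℝ}
    (hf : IsUniqueSignChange f a b x)
    (hsign : ∀ y ∈ Ioo a b, SignType.sign (g y) = SignType.sign (f y)) :
    IsUniqueSignChange g a b x := by
  obtain ⟨hx, hfx, hpos, hneg, huniq⟩ := hf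
  have hsub_left : Ioo a x ⊆ Ioo a b := Ioo_subset_Ioo_right hx.2.le
  have hsub_right : Ioo x b ⊆ Ioo a b := Ioo_subset_Ioo_left hx.1.le
  refine ⟨hx, ?_, fun y hy => ?_, fun y hy => ?_, fun y hy hgy => huniq y hy ?_⟩
  · rw [← _root_.sign_eq_zero_iff, hsign x hx, _root_.sign_eq_zero_iff, hfx]
  · rw [← sign_eq_one_iff, hsign y (hsub_left hy), sign_eq_one_iff]
    exact hpos y hy
  · rw [← sign_eq_neg_one_iff, hsign y (hsub_right hy), sign_eq_neg_one_iff]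
    exact hneg y hy
  · rw [← _root_.sign_eq_zero_iff, ← hsign y hy, _root_.sign_eq_zero_iff, hgy]

section

variable {κ m c : ℝ}

noncomputable def gNumerator (κ m c r : ℝ) : ℝ :=
  c ^ 2 * (12 - 9 * κ * r ^ 2) ^ ((3 : ℝ) / 2) - 24 * m * r

theorem continuous_gNumerator : Continuous (gNumerator κ m c) := by
  unfold gNumerator
  fun_prop (disch := norm_num)

theorem gNumerator_zero_pos (hc : c ≠ 0) : 0 < gNumerator κ m c 0 := by
  unfold gNumerator
  norm_num
  positivity

theorem three_le_twelve_sub (hκ : 0 < κ) {r : ℝ} (hr : r ∈ Icc 0 (1 / √κ)) :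
    3 ≤ 12 - 9 * κ * r ^ 2 := by
  have hκr : κ * r ^ 2 ≤ 1 := by
    have h1 : √κ * r ≤ 1 := by
      have := (le_div_iff₀ (Real.sqrt_pos.2 hκ)).1 hr.2
      linarith
    have h2 : (√κ * r) ^ 2 ≤ 1 := pow_le_one₀ (by have := hr.1; positivity) h1
    rwa [mul_pow, Real.sq_sqrt hκ.le] at h2
  linarith

theorem gNumerator_strictAntiOn (hκ : 0 < κ) (hm : 0 < m) :
    StrictAntiOn (gNumerator κ m c) (Icc 0 (1 / √κ)) := by
  intro x hx y hy hxy
  have hbase_le : (12 - 9 * κ * y ^ 2) ^ ((3 : ℝ) / 2) ≤ (12 - 9 * κ * x ^ 2) ^ ((3 : ℝ) / 2) := by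
    have hsq : x ^ 2 ≤ y ^ 2 := pow_le_pow_left₀ hx.1 hxy.le 2
    gcongr
    linarith [three_le_twelve_sub hκ hy]
  unfold gNumerator
  nlinarith [sq_nonneg c]

theorem three_rpow_three_halves : (3 : ℝ) ^ ((3 : ℝ) / 2) = 3 * √3 := by
  rw [show (3 : ℝ) / 2 = 1 + 1 / 2 by norm_num, Real.rpow_add (by norm_num), Real.rpow_one,
    ← Real.sqrt_eq_rpow]

theorem gNumerator_inv_sqrt_neg (hκ : 0 < κ) (h : √κ * c ^ 2 - 8 / √3 * m < 0) :
    gNumerator κ m c (1 / √κ) < 0 := by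
  have hsκ : 0 < √κ := Real.sqrt_pos.2 hκ
  have hs3 : 0 < √(3 : ℝ) := by positivity
  have hbase : 12 - 9 * κ * (1 / √κ) ^ 2 = 3 := by
    rw [div_pow, Real.sq_sqrt hκ.le]
    field_simp
    norm_num
  have hcrit : √3 * √κ * c ^ 2 < 8 * m := by
    have := mul_lt_mul_of_pos_left (sub_neg.1 h) hs3
    rwa [← mul_assoc, ← mul_assoc, mul_div_cancel₀ _ hs3.ne'] at this
  unfold gNumerator
  rw [hbase, three_rpow_three_halves, sub_neg, mul_one_div, lt_div_iff₀ hsκ]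
  nlinarith

theorem sign_g_eq_sign_gNumerator (hκ : 0 < κ) {r : ℝ} (hr : r ∈ Ioo 0 (1 / √κ)) :
    SignType.sign (c ^ 2 / r - 24 * m / (12 - 9 * κ * r ^ 2) ^ ((3 : ℝ) / 2)) =
      SignType.sign (gNumerator κ m c r) := by
  have hw : 0 < (12 - 9 * κ * r ^ 2) ^ ((3 : ℝ) / 2) := by
    have := three_le_twelve_sub hκ (Ioo_subset_Icc_self hr)
    exact Real.rpow_pos_of_pos (by linarith) _
  have hden : 0 < r * (12 - 9 * κ * r ^ 2) ^ ((3 : ℝ) / 2) := mul_pos hr.1 hw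
  rw [div_sub_div _ _ hr.1.ne' hw.ne', div_eq_mul_inv, sign_mul, sign_pos (inv_pos.2 hden),
    mul_one, gNumerator]
  ring_nf

end

/-- If `κ^{1/2} c² − (8/√3) m < 0`, there is a unique `r₀ ∈ (0, κ^{−1/2})` with
`g(r₀) = 0`, where `g(r) = c²/r − 24m/(12 − 9κr²)^{3/2}`; moreover `g > 0` on
`(0, r₀)` and `g < 0` on `(r₀, κ^{−1/2})`. -/
theorem stmt_5 (κ m c : ℝ) (hκ : 0 < κ) (hm : 0 < m) (hc : c ≠ 0)
    (h : Real.sqrt κ * c ^ 2 - 8 / Real.sqrt 3 * m < 0) :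
    ∃ r₀ ∈ Set.Ioo (0 : ℝ) (1 / Real.sqrt κ),
      (c ^ 2 / r₀ - 24 * m / (12 - 9 * κ * r₀ ^ 2) ^ ((3 : ℝ) / 2) = 0) ∧
      (∀ r ∈ Set.Ioo (0 : ℝ) r₀,
        0 < c ^ 2 / r - 24 * m / (12 - 9 * κ * r ^ 2) ^ ((3 : ℝ) / 2)) ∧
      (∀ r ∈ Set.Ioo r₀ (1 / Real.sqrt κ),
        c ^ 2 / r - 24 * m / (12 - 9 * κ * r ^ 2) ^ ((3 : ℝ) / 2) < 0) ∧
      (∀ r ∈ Set.Ioo (0 : ℝ) (1 / Real.sqrt κ),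
        c ^ 2 / r - 24 * m / (12 - 9 * κ * r ^ 2) ^ ((3 : ℝ) / 2) = 0 → r = r₀) := by
  obtain ⟨r₀, hr₀⟩ := (gNumerator_strictAntiOn hκ hm).exists_isUniqueSignChange
    (by positivity) continuous_gNumerator.continuousOn (gNumerator_zero_pos hc)
    (gNumerator_inv_sqrt_neg hκ h)
  exact ⟨r₀, hr₀.congr_sign fun r hr => sign_g_eq_sign_gNumerator hκ hr⟩
end

section
/- Suppose κ < 0, m > 0, c ≠ 0, and r₊ > 0 satisfies c^2(12 − 9κ r₊^2)^{3/2} = 24 m r₊ (equivalently g(r₊) = 0). Then g'(r₊) = 0 if and only if r₊ = (−2/(3κ))^{1/2}, where g(r) = c^2/r − 24m/(12 − 9κr^2)^{3/2}. -/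
/-! Write `A = 12 - 9κr²`, so that `A^{5/2} = A · A^{3/2}`. The root condition
`c² A^{3/2} = 24 m r` eliminates `m` from `g'(r)`, leaving
`g'(r) = -c² (A + 27κr²) / (r² A) = -c² (12 + 18κr²) / (r² A)`.
Hence `g'(r) = 0` iff `r² = -2/(3κ)`. -/

lemma neg_div_sq_sub_div_of_mul_eq {c m κ r A B : ℝ} (hr : r ≠ 0) (hA : A ≠ 0) (hB : B ≠ 0)
    (hroot : c ^ 2 * B = 24 * m * r) :
    -(c ^ 2) / r ^ 2 - 648 * m * κ * r / (A * B) = -(c ^ 2) * (A + 27 * κ * r ^ 2) / (r ^ 2 * A) := by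
  have hm : m = c ^ 2 * B / (24 * r) := by
    field_simp
    linarith
  subst hm
  field_simp
  ring

lemma rpow_five_halves_eq_mul {x : ℝ} (hx : 0 < x) :
    x ^ ((5 : ℝ) / 2) = x * x ^ ((3 : ℝ) / 2) := by
  rw [show (5 : ℝ) / 2 = 1 + 3 / 2 by norm_num, Real.rpow_add hx, Real.rpow_one]

lemma eq_sqrt_neg_two_div_iff {κ r : ℝ} (hκ : κ ≠ 0) (hr : 0 < r) :
    r = Real.sqrt (-2 / (3 * κ)) ↔ 12 + 18 * κ * r ^ 2 = 0 := by
  rw [eq_comm, Real.sqrt_eq_iff_mul_self_eq_of_pos hr]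
  rw [eq_div_iff (by positivity)]
  constructor <;> intro h <;> linarith

theorem stmt_8_general (κ m c rp : ℝ) (hκ : κ < 0) (hc : c ≠ 0)
    (hr : 0 < rp)
    (hzero : c ^ 2 * (12 - 9 * κ * rp ^ 2) ^ ((3 : ℝ) / 2) = 24 * m * rp) :
    (-(c ^ 2) / rp ^ 2
        - 648 * m * κ * rp / (12 - 9 * κ * rp ^ 2) ^ ((5 : ℝ) / 2) = 0)
      ↔ rp = Real.sqrt (-2 / (3 * κ)) := by
  have hA : 0 < 12 - 9 * κ * rp ^ 2 := by nlinarith [sq_nonneg rp]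
  rw [rpow_five_halves_eq_mul hA,
    neg_div_sq_sub_div_of_mul_eq hr.ne' hA.ne' (Real.rpow_pos_of_pos hA _).ne' hzero,
    eq_sqrt_neg_two_div_iff hκ.ne hr]
  have hden : rp ^ 2 * (12 - 9 * κ * rp ^ 2) ≠ 0 := by positivity
  have hsum : 12 - 9 * κ * rp ^ 2 + 27 * κ * rp ^ 2 = 12 + 18 * κ * rp ^ 2 := by ring
  simp [hden, hc, hsum]

/-- If `κ < 0`, `m > 0`, `c ≠ 0`, and `r₊ > 0` satisfies
`c²(12 − 9κ r₊²)^{3/2} = 24 m r₊` (i.e. `g(r₊) = 0`), then `g'(r₊) = 0` iff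
`r₊ = (−2/(3κ))^{1/2}`, where
`g'(r) = −c²/r² − 648 m κ r/(12 − 9κr²)^{5/2}`. -/
theorem stmt_8 (κ m c rp : ℝ) (hκ : κ < 0) (hm : 0 < m) (hc : c ≠ 0)
    (hr : 0 < rp)
    (hzero : c ^ 2 * (12 - 9 * κ * rp ^ 2) ^ ((3 : ℝ) / 2) = 24 * m * rp) :
    (-(c ^ 2) / rp ^ 2
        - 648 * m * κ * rp / (12 - 9 * κ * rp ^ 2) ^ ((5 : ℝ) / 2) = 0)
      ↔ rp = Real.sqrt (-2 / (3 * κ)) :=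
  stmt_8_general κ m c rp hκ hc hr hzero
end

section
/- Suppose κ < 0, m > 0, c ≠ 0, and r₊ = (−2/(3κ))^{1/2} satisfies g(r₊) = 0, which is equivalent to 9√3 c^2 (−κ)^{1/2} − 4m = 0. Then the second derivative g''(r₊) is strictly positive. -/
/-!
At `r₊` we have `3κr₊² = -2`, so `12 - 9κr₊² = 18`, and the horizon condition becomes
`4 m r₊ = 9√2 c²`. Eliminating `κ` and `m` with these two relations collapses `g''(r₊)` to
`4c² / (3 r₊³)`, which is positive since `c ≠ 0`.
-/

open Real

lemma Real.rpow_half_add_natCast {x : ℝ} (hx : 0 < x) (n : ℕ) :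
    x ^ ((1 : ℝ) / 2 + n) = √x * x ^ n := by
  rw [rpow_add_natCast hx.ne', sqrt_eq_rpow]

lemma Real.sqrt_eighteen : √(18 : ℝ) = 3 * √2 := by
  rw [show (18 : ℝ) = 3 ^ 2 * 2 by norm_num, sqrt_mul (by positivity), sqrt_sq (by norm_num)]

lemma secondDeriv_eq_of_horizon {κ m c r : ℝ} (hr : 0 < r) (hκr : 3 * κ * r ^ 2 = -2)
    (hmr : 4 * m * r = 9 * √2 * c ^ 2) :
    2 * c ^ 2 / r ^ 3
        - 648 * m * κ / (12 - 9 * κ * r ^ 2) ^ ((5 : ℝ) / 2)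
        - 29160 * m * κ ^ 2 * r ^ 2 / (12 - 9 * κ * r ^ 2) ^ ((7 : ℝ) / 2)
      = 4 * c ^ 2 / (3 * r ^ 3) := by
  have h18 : 12 - 9 * κ * r ^ 2 = 18 := by linear_combination -3 * hκr
  have hκ : κ = -2 / (3 * r ^ 2) := by field_simp; linarith
  have hm : m = 9 * √2 * c ^ 2 / (4 * r) := by field_simp; linarith
  rw [h18, show (5 : ℝ) / 2 = 1 / 2 + (2 : ℕ) by norm_num,
    show (7 : ℝ) / 2 = 1 / 2 + (3 : ℕ) by norm_num, rpow_half_add_natCast (by norm_num),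
    rpow_half_add_natCast (by norm_num), sqrt_eighteen, hκ, hm]
  field_simp
  ring

theorem stmt_9_general (κ m c rp : ℝ) (hκ : κ < 0) (hc : c ≠ 0)
    (hr : rp = Real.sqrt (-2 / (3 * κ)))
    (hzero : 9 * Real.sqrt 3 * c ^ 2 * Real.sqrt (-κ) - 4 * m = 0) :
    0 < 2 * c ^ 2 / rp ^ 3
        - 648 * m * κ / (12 - 9 * κ * rp ^ 2) ^ ((5 : ℝ) / 2)
        - 29160 * m * κ ^ 2 * rp ^ 2 / (12 - 9 * κ * rp ^ 2) ^ ((7 : ℝ) / 2) := by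
  have hpos : 0 < -2 / (3 * κ) := div_pos_of_neg_of_neg (by norm_num) (by linarith)
  have hrp : 0 < rp := hr ▸ sqrt_pos.mpr hpos
  have hκrp : 3 * κ * rp ^ 2 = -2 := by
    rw [hr, sq_sqrt hpos.le]
    field_simp [hκ.ne]
  have hsqrt : √3 * √(-κ) * rp = √2 := by
    rw [hr, ← sqrt_mul (by norm_num), ← sqrt_mul (by linarith)]
    congr 1
    field_simp [hκ.ne]
  have hmrp : 4 * m * rp = 9 * √2 * c ^ 2 := by
    rw [← hsqrt]
    linear_combination -rp * hzero
  rw [secondDeriv_eq_of_horizon hrp hκrp hmrp]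
  positivity

/-- If `κ < 0`, `m > 0`, `c ≠ 0`, `r₊ = (−2/(3κ))^{1/2}` and `g(r₊) = 0`
(equivalently `9√3 c² (−κ)^{1/2} − 4m = 0`), then `g''(r₊) > 0`, where
`g''(r) = 2c²/r³ − 648 m κ/(12 − 9κr²)^{5/2} − 29160 m κ² r²/(12 − 9κr²)^{7/2}`. -/
theorem stmt_9 (κ m c rp : ℝ) (hκ : κ < 0) (hm : 0 < m) (hc : c ≠ 0)
    (hr : rp = Real.sqrt (-2 / (3 * κ)))
    (hzero : 9 * Real.sqrt 3 * c ^ 2 * Real.sqrt (-κ) - 4 * m = 0) :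
    0 < 2 * c ^ 2 / rp ^ 3
        - 648 * m * κ / (12 - 9 * κ * rp ^ 2) ^ ((5 : ℝ) / 2)
        - 29160 * m * κ ^ 2 * rp ^ 2 / (12 - 9 * κ * rp ^ 2) ^ ((7 : ℝ) / 2) :=
  stmt_9_general κ m c rp hκ hc hr hzero
end

section
/- For κ > 0, m > 0, c ≠ 0, the polynomial q(x) = 16κ^2(c^4κ + m^2)x^3 − 8κ(6c^4κ + 5m^2)x^2 + (48c^4κ + 25m^2)x − 16c^4 has exactly one positive real root. -/
/-- If a cubic has two distinct real roots, its discriminant is nonnegative. -/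
lemma aux_disc (c3 c2 c1 c0 x y : ℝ) (hc3 : c3 ≠ 0)
    (hx : c3 * x ^ 3 + c2 * x ^ 2 + c1 * x + c0 = 0)
    (hy : c3 * y ^ 3 + c2 * y ^ 2 + c1 * y + c0 = 0)
    (hxy : x ≠ y) :
    0 ≤ 18 * c3 * c2 * c1 * c0 - 4 * c2 ^ 3 * c0 + c2 ^ 2 * c1 ^ 2
      - 4 * c3 * c1 ^ 3 - 27 * c3 ^ 2 * c0 ^ 2 := by
  obtain ⟨X, hX⟩ : ∃ X, X = c3 * x := ⟨_, rfl⟩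
  obtain ⟨Y, hY⟩ : ∃ Y, Y = c3 * y := ⟨_, rfl⟩
  have hXY : X ≠ Y := by
    rw [hX, hY]
    exact fun h => hxy (mul_left_cancel₀ hc3 h)
  have h1 : X ^ 3 + c2 * X ^ 2 + (c1 * c3) * X + c0 * c3 ^ 2 = 0 := by
    rw [hX]; linear_combination c3 ^ 2 * hx
  have h2 : Y ^ 3 + c2 * Y ^ 2 + (c1 * c3) * Y + c0 * c3 ^ 2 = 0 := by
    rw [hY]; linear_combination c3 ^ 2 * hy
  have hfac : (X - Y) * (X ^ 2 + X * Y + Y ^ 2 + c2 * (X + Y) + c1 * c3) = 0 := by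
    linear_combination h1 - h2
  have h3 : X ^ 2 + X * Y + Y ^ 2 + c2 * (X + Y) + c1 * c3 = 0 := by
    rcases mul_eq_zero.mp hfac with h | h
    · exact absurd (sub_eq_zero.mp h) hXY
    · exact h
  have hu : c1 * c3 = -(X ^ 2 + X * Y + Y ^ 2) - c2 * (X + Y) := by linarith
  have hv : c0 * c3 ^ 2
      = -X ^ 3 - c2 * X ^ 2 - (-(X ^ 2 + X * Y + Y ^ 2) - c2 * (X + Y)) * X := by
    linear_combination h1 - X * h3
  have key : ((X - Y) * (X + 2 * Y + c2) * (2 * X + Y + c2)) ^ 2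
      = 18 * c2 * (c1 * c3) * (c0 * c3 ^ 2) - 4 * c2 ^ 3 * (c0 * c3 ^ 2)
        + c2 ^ 2 * (c1 * c3) ^ 2 - 4 * (c1 * c3) ^ 3 - 27 * (c0 * c3 ^ 2) ^ 2 := by
    rw [hu, hv]; ring
  have h6 : c3 ^ 2 * (18 * c3 * c2 * c1 * c0 - 4 * c2 ^ 3 * c0 + c2 ^ 2 * c1 ^ 2
      - 4 * c3 * c1 ^ 3 - 27 * c3 ^ 2 * c0 ^ 2)
      = ((X - Y) * (X + 2 * Y + c2) * (2 * X + Y + c2)) ^ 2 := by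
    linear_combination -key
  have hc3sq : 0 < c3 ^ 2 := by positivity
  nlinarith [h6, sq_nonneg ((X - Y) * (X + 2 * Y + c2) * (2 * X + Y + c2)), hc3sq]

/-- For `κ > 0`, `m > 0`, `c ≠ 0`, the polynomial
`q(x) = 16κ²(c⁴κ + m²)x³ − 8κ(6c⁴κ + 5m²)x² + (48c⁴κ + 25m²)x − 16c⁴`
has exactly one positive real root. -/
theorem stmt_13 (κ m c : ℝ) (hκ : 0 < κ) (hm : 0 < m) (hc : c ≠ 0) :
    ∃! x : ℝ, 0 < x ∧
      16 * κ ^ 2 * (c ^ 4 * κ + m ^ 2) * x ^ 3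
        - 8 * κ * (6 * c ^ 4 * κ + 5 * m ^ 2) * x ^ 2
        + (48 * c ^ 4 * κ + 25 * m ^ 2) * x - 16 * c ^ 4 = 0 := by
  have hc4 : 0 < c ^ 4 := by positivity
  set f : ℝ → ℝ := fun x =>
      16 * κ ^ 2 * (c ^ 4 * κ + m ^ 2) * x ^ 3
        - 8 * κ * (6 * c ^ 4 * κ + 5 * m ^ 2) * x ^ 2
        + (48 * c ^ 4 * κ + 25 * m ^ 2) * x - 16 * c ^ 4 with hf
  have hcont : ContinuousOn f (Set.Icc 0 κ⁻¹) := by fun_prop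
  have h0 : f 0 = -(16 * c ^ 4) := by simp [hf]
  have hinv : f κ⁻¹ = m ^ 2 / κ := by
    simp only [hf]
    field_simp
    ring
  have hIV := intermediate_value_Ioo (le_of_lt (inv_pos.mpr hκ)) hcont
  have hmem : (0 : ℝ) ∈ Set.Ioo (f 0) (f κ⁻¹) := by
    constructor
    · rw [h0]; nlinarith
    · rw [hinv]; positivity
  obtain ⟨x, hx_mem, hx_eq⟩ := hIV hmem
  refine ⟨x, ⟨hx_mem.1, hx_eq⟩, ?_⟩
  rintro y ⟨hy0, hy⟩
  by_contra hne
  have hc3ne : (16 * κ ^ 2 * (c ^ 4 * κ + m ^ 2)) ≠ 0 := by positivity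
  have hD := aux_disc (16 * κ ^ 2 * (c ^ 4 * κ + m ^ 2))
      (-(8 * κ * (6 * c ^ 4 * κ + 5 * m ^ 2))) (48 * c ^ 4 * κ + 25 * m ^ 2)
      (-(16 * c ^ 4)) y x hc3ne (by linear_combination hy)
      (by linear_combination hx_eq) hne
  have hEq : 18 * (16 * κ ^ 2 * (c ^ 4 * κ + m ^ 2)) * (-(8 * κ * (6 * c ^ 4 * κ + 5 * m ^ 2)))
        * (48 * c ^ 4 * κ + 25 * m ^ 2) * (-(16 * c ^ 4))
      - 4 * (-(8 * κ * (6 * c ^ 4 * κ + 5 * m ^ 2))) ^ 3 * (-(16 * c ^ 4))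
      + (-(8 * κ * (6 * c ^ 4 * κ + 5 * m ^ 2))) ^ 2 * (48 * c ^ 4 * κ + 25 * m ^ 2) ^ 2
      - 4 * (16 * κ ^ 2 * (c ^ 4 * κ + m ^ 2)) * (48 * c ^ 4 * κ + 25 * m ^ 2) ^ 3
      - 27 * (16 * κ ^ 2 * (c ^ 4 * κ + m ^ 2)) ^ 2 * (-(16 * c ^ 4)) ^ 2
      = -(8000 * c ^ 4 * m ^ 6 * κ ^ 3 + 6912 * c ^ 8 * m ^ 4 * κ ^ 4) := by ring
  rw [hEq] at hD
  have : 0 < 8000 * c ^ 4 * m ^ 6 * κ ^ 3 + 6912 * c ^ 8 * m ^ 4 * κ ^ 4 := by positivity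
  linarith
end

section
/- For κ < 0, m > 0, c ≠ 0 with c^4κ + m^2 ≤ 0, the polynomial q(x) = 16κ^2(c^4κ + m^2)x^3 − 8κ(6c^4κ + 5m^2)x^2 + (48c^4κ + 25m^2)x − 16c^4 has no positive real root. -/
/-- For `κ < 0`, `m > 0`, `c ≠ 0` with `c⁴κ + m² ≤ 0`, the polynomial
`q(x) = 16κ²(c⁴κ + m²)x³ − 8κ(6c⁴κ + 5m²)x² + (48c⁴κ + 25m²)x − 16c⁴`
has no positive real root. -/
theorem stmt_14 (κ m c : ℝ) (hκ : κ < 0) (hm : 0 < m) (hc : c ≠ 0)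
    (h : c ^ 4 * κ + m ^ 2 ≤ 0) :
    ∀ x : ℝ, 0 < x →
      16 * κ ^ 2 * (c ^ 4 * κ + m ^ 2) * x ^ 3
        - 8 * κ * (6 * c ^ 4 * κ + 5 * m ^ 2) * x ^ 2
        + (48 * c ^ 4 * κ + 25 * m ^ 2) * x - 16 * c ^ 4 ≠ 0 := by
  intro x hx
  have hc4 : 0 < c ^ 4 := by positivity
  have h1 : 16 * κ ^ 2 * (c ^ 4 * κ + m ^ 2) * x ^ 3 ≤ 0 := by
    have := mul_nonpos_of_nonpos_of_nonneg h (by positivity : (0:ℝ) ≤ 16 * κ ^ 2 * x ^ 3)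
    nlinarith [this]
  have h2 : 6 * c ^ 4 * κ + 5 * m ^ 2 < 0 := by nlinarith
  have h3 : -8 * κ * (6 * c ^ 4 * κ + 5 * m ^ 2) * x ^ 2 < 0 := by
    have hp : 0 < (-8 * κ) * x ^ 2 := mul_pos (by linarith) (pow_pos hx 2)
    nlinarith [mul_neg_of_pos_of_neg hp h2]
  have h4 : (48 * c ^ 4 * κ + 25 * m ^ 2) * x < 0 := by nlinarith
  nlinarith
end

section
/- For κ < 0, m > 0, c ≠ 0 with c^4κ + m^2 > 0, the polynomial q(x) = 16κ^2(c^4κ + m^2)x^3 − 8κ(6c^4κ + 5m^2)x^2 + (48c^4κ + 25m^2)x − 16c^4 has exactly one positive real root. -/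
/-!
The coefficients of `q` have exactly one sign change: the leading one is positive, the constant
one negative, and if the `x²`-coefficient is negative, i.e. `6c⁴κ + 5m² < 0`, then the
`x`-coefficient `48c⁴κ + 25m² = 8(6c⁴κ + 5m²) - 15m²` is negative too. So `q` has a positive root
by the intermediate value theorem, and at most one: for two positive roots `x ≠ y`, the
combination `y q(x) - x q(y)` (if the `x²`-coefficient is nonnegative) or `y³ q(x) - x³ q(y)`
(otherwise) is `(x - y)` times a factor of strict sign.
-/

open Polynomial Filter

theorem Polynomial.exists_pos_isRoot_of_eval_zero_neg (P : ℝ[X]) (hdeg : 0 < P.degree)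
    (hlead : 0 ≤ P.leadingCoeff) (h0 : P.eval 0 < 0) : ∃ x, 0 < x ∧ P.IsRoot x := by
  obtain ⟨M, hM⟩ := ((P.tendsto_atTop_of_leadingCoeff_nonneg hdeg hlead).eventually_gt_atTop 0
    |>.and (eventually_ge_atTop 0)).exists
  obtain ⟨x, hx, hPx⟩ :=
    intermediate_value_Ioo hM.2 P.continuousOn_aeval (show (0 : ℝ) ∈ Set.Ioo _ _ from ⟨h0, hM.1⟩)
  exact ⟨x, hx.1, hPx⟩

namespace Cubic

theorem eval_toPoly {R : Type*} [CommSemiring R] (P : Cubic R) (x : R) :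
    P.toPoly.eval x = P.a * x ^ 3 + P.b * x ^ 2 + P.c * x + P.d := by
  simp [toPoly]

variable {P : Cubic ℝ} {x y : ℝ}

theorem exists_pos_isRoot (ha : 0 < P.a) (hd : P.d < 0) : ∃ x, 0 < x ∧ P.toPoly.IsRoot x := by
  refine P.toPoly.exists_pos_isRoot_of_eval_zero_neg ?_ ?_ ?_
  · rw [degree_of_a_ne_zero ha.ne']
    norm_num
  · rw [leadingCoeff_of_a_ne_zero ha.ne']
    exact ha.le
  · simpa [eval_toPoly] using hd

theorem eq_of_isRoot_of_b_nonneg (ha : 0 ≤ P.a) (hb : 0 ≤ P.b) (hd : P.d < 0) (hx : 0 < x)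
    (hy : 0 < y) (hPx : P.toPoly.IsRoot x) (hPy : P.toPoly.IsRoot y) : x = y := by
  rw [IsRoot, eval_toPoly] at hPx hPy
  have hfactor : (x - y) * (P.a * (x * y) * (x + y) + P.b * (x * y) - P.d) = 0 := by
    linear_combination y * hPx - x * hPy
  have hpos : 0 < P.a * (x * y) * (x + y) + P.b * (x * y) - P.d := by
    have : 0 ≤ P.a * (x * y) * (x + y) + P.b * (x * y) := by positivity
    linarith
  exact sub_eq_zero.mp ((mul_eq_zero.mp hfactor).resolve_right hpos.ne')

theorem eq_of_isRoot_of_b_nonpos_of_c_nonpos (hb : P.b ≤ 0) (hc : P.c ≤ 0) (hd : P.d < 0)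
    (hx : 0 < x) (hy : 0 < y) (hPx : P.toPoly.IsRoot x) (hPy : P.toPoly.IsRoot y) : x = y := by
  rw [IsRoot, eval_toPoly] at hPx hPy
  have hfactor : (x - y) * (P.b * (x * y) ^ 2 + P.c * (x * y) * (x + y)
      + P.d * (x ^ 2 + x * y + y ^ 2)) = 0 := by
    linear_combination x ^ 3 * hPy - y ^ 3 * hPx
  have hneg : P.b * (x * y) ^ 2 + P.c * (x * y) * (x + y) + P.d * (x ^ 2 + x * y + y ^ 2) < 0 := by
    have : 0 < x ^ 2 + x * y + y ^ 2 := by positivity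
    nlinarith [mul_nonpos_of_nonpos_of_nonneg hb (sq_nonneg (x * y)),
      mul_nonpos_of_nonpos_of_nonneg hc (by positivity : 0 ≤ x * y * (x + y))]
  exact sub_eq_zero.mp ((mul_eq_zero.mp hfactor).resolve_right hneg.ne)

theorem existsUnique_pos_isRoot (ha : 0 < P.a) (hd : P.d < 0) (hbc : P.b < 0 → P.c ≤ 0) :
    ∃! x, 0 < x ∧ P.toPoly.IsRoot x := by
  obtain ⟨x, hx, hPx⟩ := exists_pos_isRoot ha hd
  refine ⟨x, ⟨hx, hPx⟩, fun y ⟨hy, hPy⟩ => ?_⟩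
  rcases le_or_gt 0 P.b with hb | hb
  · exact eq_of_isRoot_of_b_nonneg ha.le hb hd hy hx hPy hPx
  · exact eq_of_isRoot_of_b_nonpos_of_c_nonpos hb.le (hbc hb) hd hy hx hPy hPx

end Cubic

theorem stmt_15_general (κ m c : ℝ) (hκ : κ < 0) (hc : c ≠ 0)
    (h : 0 < c ^ 4 * κ + m ^ 2) :
    ∃! x : ℝ, 0 < x ∧
      16 * κ ^ 2 * (c ^ 4 * κ + m ^ 2) * x ^ 3
        - 8 * κ * (6 * c ^ 4 * κ + 5 * m ^ 2) * x ^ 2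
        + (48 * c ^ 4 * κ + 25 * m ^ 2) * x - 16 * c ^ 4 = 0 := by
  let q : Cubic ℝ := ⟨16 * κ ^ 2 * (c ^ 4 * κ + m ^ 2), -8 * κ * (6 * c ^ 4 * κ + 5 * m ^ 2),
    48 * c ^ 4 * κ + 25 * m ^ 2, -16 * c ^ 4⟩
  have ha : 0 < q.a := by have := hκ.ne; positivity
  have hd : q.d < 0 := by
    have : 0 < c ^ 4 := by positivity
    simpa [q] using this
  have hbc : q.b < 0 → q.c ≤ 0 := by
    intro hb
    have : 6 * c ^ 4 * κ + 5 * m ^ 2 < 0 := by nlinarith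
    linarith [sq_nonneg m]
  convert q.existsUnique_pos_isRoot ha hd hbc using 3 with x
  rw [IsRoot, q.eval_toPoly]
  dsimp only [q]
  ring_nf

/-- For `κ < 0`, `m > 0`, `c ≠ 0` with `c⁴κ + m² > 0`, the polynomial
`q(x) = 16κ²(c⁴κ + m²)x³ − 8κ(6c⁴κ + 5m²)x² + (48c⁴κ + 25m²)x − 16c⁴`
has exactly one positive real root. -/
theorem stmt_15 (κ m c : ℝ) (hκ : κ < 0) (hm : 0 < m) (hc : c ≠ 0)
    (h : 0 < c ^ 4 * κ + m ^ 2) :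
    ∃! x : ℝ, 0 < x ∧
      16 * κ ^ 2 * (c ^ 4 * κ + m ^ 2) * x ^ 3
        - 8 * κ * (6 * c ^ 4 * κ + 5 * m ^ 2) * x ^ 2
        + (48 * c ^ 4 * κ + 25 * m ^ 2) * x - 16 * c ^ 4 = 0 :=
  stmt_15_general κ m c hκ hc h
end

section
/- Suppose κ < 0, m > 0, c ≠ 0, and r₊ > 0 satisfies u(r₊) = 0, where u(r) = c^2(1 − κr^2)/r − m(5 − 4κr^2)/(4(1 − κr^2)^{1/2}). Then u'(r₊) ≠ 0. (Equivalently, u'(r₊) = 0 would force r₊^2 = 5/(2κ) < 0, a contradiction.) -/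
/-- If `κ < 0`, `m > 0`, `c ≠ 0`, `r₊ > 0` and `u(r₊) = 0`, where
`u(r) = c²(1 − κr²)/r − m(5 − 4κr²)/(4√(1 − κr²))`, then `u'(r₊) ≠ 0`, where
`u'(r) = −c²(1 + κr²)/r² − κ m r(4κr² − 3)/(4(1 − κr²)^{3/2})`. -/
theorem stmt_16 (κ m c rp : ℝ) (hκ : κ < 0) (hm : 0 < m) (hc : c ≠ 0)
    (hr : 0 < rp)
    (hzero : c ^ 2 * (1 - κ * rp ^ 2) / rp
      - m * (5 - 4 * κ * rp ^ 2) / (4 * Real.sqrt (1 - κ * rp ^ 2)) = 0) :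
    -(c ^ 2) * (1 + κ * rp ^ 2) / rp ^ 2
      - κ * m * rp * (4 * κ * rp ^ 2 - 3)
          / (4 * (1 - κ * rp ^ 2) ^ ((3 : ℝ) / 2)) ≠ 0 := by
  have ha : (0:ℝ) < 1 - κ * rp ^ 2 := by nlinarith [sq_nonneg rp]
  set s := Real.sqrt (1 - κ * rp ^ 2) with hsdef
  have hs : 0 < s := Real.sqrt_pos.mpr ha
  have hs2 : s ^ 2 = 1 - κ * rp ^ 2 := Real.sq_sqrt ha.le
  have h32 : (1 - κ * rp ^ 2) ^ ((3 : ℝ) / 2) = s ^ 3 := by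
    rw [hsdef, Real.sqrt_eq_rpow, ← Real.rpow_natCast (_ ^ ((1:ℝ)/2)) 3,
      ← Real.rpow_mul ha.le]
    norm_num
  rw [h32]
  -- from hzero: c^2 * (1 - κ rp^2) * (4 s) = m * (5 - 4 κ rp^2) * rp
  rw [sub_eq_zero, div_eq_div_iff hr.ne' (by positivity)] at hzero
  intro h
  rw [sub_eq_zero, div_eq_div_iff (by positivity) (by positivity)] at h
  rw [← hs2] at hzero
  have key : m * rp * (5 - 2 * (κ * rp ^ 2)) = 0 := by
    linear_combination (-(1 + κ * rp ^ 2)) * hzero - h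
  nlinarith [mul_pos hm hr, sq_nonneg rp]
end
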